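/- Let p be a positive probability mass function on a product V^2 (two-token sequences over finite vocabulary V), α > 1. The chain of equalities: the power conditional of the first token can be written as p^pow_α(x₁) = 1 / (1 + Σ_{x'₁ ≠ x₁} [p(x'₁)^α/p(x₁)^α] · [ζ(x'₁)/ζ(x₁)]), where p(x₁) is the first-token marginal, ζ(a) = Σ_{x₂} p(x₂ | a)^α, and p^pow_α(x₁) = Σ_{x₂} p(x₁, x₂)^α / Σ_{x'₁, x₂} p(x'₁, x₂)^α. -/

import Mathlib

/-!
Writing `S a = Σ_{x₂} p(a, x₂)^α` and `m a = Σ_{x₂} p(a, x₂)`, homogeneity of `t ↦ t^α` gives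
`ζ a = S a / m a ^ α`, so each summand `(m a / m x₁)^α · ζ a / ζ x₁` collapses to `S a / S x₁`.
The claim is then `S x₁ / Σ_a S a = 1 / (1 + Σ_{a ≠ x₁} S a / S x₁)`, which holds for any
family with `S x₁ ≠ 0`.
-/

open Finset

theorem Finset.sum_div_rpow {ι : Type*} (s : Finset ι) {f : ι → ℝ} (hf : ∀ i ∈ s, 0 ≤ f i)
    {c : ℝ} (hc : 0 ≤ c) (α : ℝ) :
    ∑ i ∈ s, (f i / c) ^ α = (∑ i ∈ s, f i ^ α) / c ^ α := by
  rw [Finset.sum_div]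
  exact Finset.sum_congr rfl fun i hi => Real.div_rpow (hf i hi) hc α

theorem Finset.div_sum_eq_one_div_one_add_sum_erase {ι K : Type*} [Field K] [DecidableEq ι]
    {s : Finset ι} {f : ι → K} {i : ι} (hi : i ∈ s) (hfi : f i ≠ 0) :
    f i / ∑ j ∈ s, f j = 1 / (1 + ∑ j ∈ s.erase i, f j / f i) := by
  rw [← Finset.sum_div, one_add_div hfi, one_div_div, Finset.add_sum_erase s f hi]

theorem power_first_token_reciprocal_form_general
    {V : Type*} [Fintype V] [DecidableEq V]
    (p : V × V → ℝ) (hp : ∀ x, 0 < p x)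
    (α : ℝ) (x₁ : V) :
    (∑ x₂, p (x₁, x₂) ^ α) / (∑ x'₁, ∑ x₂, p (x'₁, x₂) ^ α)
      = 1 / (1 + ∑ x'₁ ∈ Finset.univ.erase x₁,
          ((∑ x₂, p (x'₁, x₂)) ^ α / (∑ x₂, p (x₁, x₂)) ^ α) *
            ((∑ x₂, (p (x'₁, x₂) / ∑ x'₂, p (x'₁, x'₂)) ^ α) /
              (∑ x₂, (p (x₁, x₂) / ∑ x'₂, p (x₁, x'₂)) ^ α))) := by
  have hV : (univ : Finset V).Nonempty := ⟨x₁, mem_univ x₁⟩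
  have hm : ∀ a, 0 < (∑ x₂, p (a, x₂)) ^ α :=
    fun a => Real.rpow_pos_of_pos (sum_pos (fun b _ => hp _) hV) α
  have hS : ∀ a, 0 < ∑ x₂, p (a, x₂) ^ α :=
    fun a => sum_pos (fun b _ => Real.rpow_pos_of_pos (hp _) α) hV
  have hζ : ∀ a, ∑ x₂, (p (a, x₂) / ∑ x'₂, p (a, x'₂)) ^ α
      = (∑ x₂, p (a, x₂) ^ α) / (∑ x₂, p (a, x₂)) ^ α :=
    fun a => sum_div_rpow _ (fun b _ => (hp _).le) (sum_nonneg fun b _ => (hp _).le) α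
  have hterm : ∀ a, (∑ x₂, p (a, x₂)) ^ α / (∑ x₂, p (x₁, x₂)) ^ α *
      ((∑ x₂, (p (a, x₂) / ∑ x'₂, p (a, x'₂)) ^ α) /
        (∑ x₂, (p (x₁, x₂) / ∑ x'₂, p (x₁, x'₂)) ^ α))
      = (∑ x₂, p (a, x₂) ^ α) / ∑ x₂, p (x₁, x₂) ^ α := by
    intro a
    rw [hζ, hζ]
    field_simp [(hm a).ne', (hm x₁).ne', (hS x₁).ne']
  simp only [hterm]
  exact div_sum_eq_one_div_one_add_sum_erase (f := fun a => ∑ x₂, p (a, x₂) ^ α)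
    (mem_univ x₁) (hS x₁).ne'

/-- Two-token special case of the decomposition: for a positive pmf `p` on `V × V`, with
first-token marginal `m a = Σ_b p(a,b)`, conditionals `p(b|a) = p(a,b)/m a` and
`ζ a = Σ_b p(b|a)^α`, the power conditional of the first token satisfies
`p^pow_α(x₁) = 1 / (1 + Σ_{x'₁ ≠ x₁} (m x'₁ / m x₁)^α-style ratio · ζ(x'₁)/ζ(x₁))`. -/
theorem power_first_token_reciprocal_form
    {V : Type*} [Fintype V] [Nonempty V] [DecidableEq V]
    (p : V × V → ℝ) (hp : ∀ x, 0 < p x) (hsum : ∑ x, p x = 1)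
    (α : ℝ) (hα : 1 < α) (x₁ : V) :
    (∑ x₂, p (x₁, x₂) ^ α) / (∑ x'₁, ∑ x₂, p (x'₁, x₂) ^ α)
      = 1 / (1 + ∑ x'₁ ∈ Finset.univ.erase x₁,
          ((∑ x₂, p (x'₁, x₂)) ^ α / (∑ x₂, p (x₁, x₂)) ^ α) *
            ((∑ x₂, (p (x'₁, x₂) / ∑ x'₂, p (x'₁, x'₂)) ^ α) /
              (∑ x₂, (p (x₁, x₂) / ∑ x'₂, p (x₁, x'₂)) ^ α))) :=
  power_first_token_reciprocal_form_general p hp α x₁
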